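/- (Latimer–MacDuffee) Let f ∈ ℤ[T] be monic irreducible of degree n with root α. There is a bijection between the ideal class monoid ICM(ℤ[α]) (fractional ℤ[α]-ideals modulo multiplication by elements of K*) and the set of GL_n(ℤ)-conjugacy classes of integer matrices with characteristic polynomial f. -/

import Mathlib

/-!
A nonzero row eigenvector `v ∈ Kⁿ` of `A` for the eigenvalue `α` exists because `f(α) = 0`. It spans
an `α`-stable `ℚ`-subspace of `K = ℚ[α]`, hence all of `K`, so it is a `ℚ`-basis; the lattice
`ℤ v₁ + ⋯ + ℤ vₙ` is then a fractional `ℤ[α]`-ideal on which `α` acts by the matrix `A`.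
Conversely the matrix of `α` in a `ℤ`-basis of a fractional ideal has that basis as a row
eigenvector, so its characteristic polynomial is divisible by `f`, hence equal to it. Eigenvectors
of `A` are unique up to a factor in `K*`, and changing the `ℤ`-basis of a lattice conjugates the
matrix by `GL_n(ℤ)`; so "`𝔞` is spanned by an eigenvector of `A`" matches ideal classes with
conjugacy classes.
-/

open Polynomial Module Submodule Matrix Set

theorem isConj_iff_exists_mul_eq_one {M : Type*} [Monoid M] {a b : M} :
    IsConj a b ↔ ∃ u v : M, u * v = 1 ∧ v * u = 1 ∧ b = u * a * v := by
  constructor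
  · rintro ⟨c, hc⟩
    exact ⟨c, ↑c⁻¹, c.mul_inv, c.inv_mul, by rw [hc.eq, Units.mul_inv_cancel_right]⟩
  · rintro ⟨u, v, huv, hvu, rfl⟩
    exact ⟨⟨u, v, huv, hvu⟩, by simp [SemiconjBy, mul_assoc, hvu]⟩

theorem LinearMap.isConj_toMatrix {ι R M : Type*} [Fintype ι] [DecidableEq ι] [CommSemiring R]
    [AddCommMonoid M] [Module R M] (b b' : Basis ι R M) (f : Module.End R M) :
    IsConj (toMatrix b b f) (toMatrix b' b' f) :=
  ⟨⟨b'.toMatrix b, b.toMatrix b', b'.toMatrix_mul_toMatrix_flip b,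
      b.toMatrix_mul_toMatrix_flip b'⟩,
    by rw [SemiconjBy, Units.val_mk, basis_toMatrix_mul_linearMap_toMatrix,
      linearMap_toMatrix_mul_basis_toMatrix]⟩

theorem Quot.exists_equiv_of_rel {α β : Type*} {r : α → α → Prop} {s : β → β → Prop}
    (R : α → β → Prop) (hα : ∀ a, ∃ b, R a b) (hβ : ∀ b, ∃ a, R a b)
    (hr : ∀ a, r a a) (hs : ∀ b, s b b)
    (h : ∀ a a' b b', R a b → R a' b' → (r a a' ↔ s b b')) :
    ∃ e : Quot r ≃ Quot s, ∀ a b, R a b → e (Quot.mk r a) = Quot.mk s b := by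
  choose F hF using hα
  choose G hG using hβ
  refine ⟨⟨Quot.lift (fun a => Quot.mk s (F a))
      (fun a a' haa' => Quot.sound ((h _ _ _ _ (hF a) (hF a')).1 haa')),
    Quot.lift (fun b => Quot.mk r (G b))
      (fun b b' hbb' => Quot.sound ((h _ _ _ _ (hG b) (hG b')).2 hbb')),
    by rintro ⟨a⟩; exact Quot.sound ((h _ _ _ _ (hG (F a)) (hF a)).2 (hs _)),
    by rintro ⟨b⟩; exact Quot.sound ((h _ _ _ _ (hF (G b)) (hG b)).1 (hr _))⟩,
    fun a b hab => Quot.sound ((h _ _ _ _ (hF a) hab).1 (hr a))⟩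

theorem Submodule.mul_mem_of_mem_adjoin_singleton {R A : Type*} [CommSemiring R] [Semiring A]
    [Algebra R A] {α : A} {p : Submodule R A} (hp : ∀ x ∈ p, α * x ∈ p) {y : A}
    (hy : y ∈ Algebra.adjoin R {α}) {x : A} (hx : x ∈ p) : y * x ∈ p := by
  induction hy using Algebra.adjoin_induction generalizing x with
  | mem z hz => rw [mem_singleton_iff.1 hz]; exact hp x hx
  | algebraMap r => rw [← Algebra.smul_def]; exact p.smul_mem r hx
  | add y z _ _ hy hz => rw [add_mul]; exact add_mem (hy hx) (hz hx)
  | mul y z _ _ hy hz => rw [mul_assoc]; exact hy (hz hx)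

theorem LinearMap.map_mul_of_mem_adjoin_singleton {R A : Type*} [CommSemiring R] [Semiring A]
    [Algebra R A] {α : A} (g : A →ₗ[R] A) (hg : ∀ z, g (α * z) = α * g z) {y : A}
    (hy : y ∈ Algebra.adjoin R {α}) (z : A) : g (y * z) = y * g z := by
  induction hy using Algebra.adjoin_induction generalizing z with
  | mem x hx => rw [mem_singleton_iff.1 hx]; exact hg z
  | algebraMap r => rw [← Algebra.smul_def, ← Algebra.smul_def, g.map_smul]
  | add x y _ _ hx hy => rw [add_mul, map_add, hx, hy, add_mul]
  | mul x y _ _ hx hy => rw [mul_assoc, hx, hy, mul_assoc]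

theorem Submodule.restrictScalars_span_adjoin_singleton {R A : Type*} [CommSemiring R]
    [CommSemiring A] [Algebra R A] {α : A} {s : Set A}
    (h : ∀ x ∈ span R s, α * x ∈ span R s) :
    (span (Algebra.adjoin R {α}) s).restrictScalars R = span R s := by
  refine le_antisymm (fun x hx => ?_) (span_le_restrictScalars R _ s)
  induction hx using span_induction with
  | mem x hx => exact subset_span hx
  | zero => exact zero_mem _
  | add x y _ _ hx hy => exact add_mem hx hy
  | smul r x _ hx => exact mul_mem_of_mem_adjoin_singleton h r.2 hx

theorem Submodule.eq_top_of_mul_mem_of_ne_zero {F K : Type*} [CommSemiring F] [Field K]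
    [Algebra F K] {α : K} (hgen : Algebra.adjoin F {α} = ⊤) {W : Submodule F K}
    (hW : ∀ x ∈ W, α * x ∈ W) {w : K} (hw : w ∈ W) (hw0 : w ≠ 0) : W = ⊤ :=
  eq_top_iff.2 fun z _ => by
    have hz : z * w⁻¹ ∈ Algebra.adjoin F {α} := hgen ▸ Algebra.mem_top
    simpa [hw0] using mul_mem_of_mem_adjoin_singleton hW hz hw

theorem Submodule.coe_span_range_smul {R K ι : Type*} [CommSemiring R] [CommSemiring K]
    [Algebra R K] (x : K) (v : ι → K) :
    (span R (range (x • v)) : Set K) = (fun y => x * y) '' span R (range v) := by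
  have : range (x • v) = LinearMap.mulLeft R x '' range v := by rw [← range_comp]; rfl
  rw [this, ← map_span, map_coe]
  rfl

namespace LatimerMacDuffee

section RowEigenvector

variable {ι R K : Type*} [Fintype ι] [CommRing R] [CommRing K] [Algebra R K]

def IsRowEigenvector (A : Matrix ι ι R) (α : K) (v : ι → K) : Prop :=
  v ᵥ* A.map (algebraMap R K) = α • v

variable {A : Matrix ι ι R} {α : K} {v : ι → K}

theorem isRowEigenvector_iff : IsRowEigenvector A α v ↔ ∀ i, α * v i = ∑ j, A j i • v j := by
  refine funext_iff.trans (forall_congr' fun i => ?_)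
  simp [vecMul, dotProduct, Algebra.smul_def, mul_comm, eq_comm]

theorem IsRowEigenvector.smul (hv : IsRowEigenvector A α v) (x : K) :
    IsRowEigenvector A α (x • v) := by
  rw [IsRowEigenvector, smul_vecMul, hv, smul_comm]

theorem IsRowEigenvector.mul_mem_span {S : Type*} [CommSemiring S] [Algebra S K] [SMul R S]
    [IsScalarTower R S K] (hv : IsRowEigenvector A α v) {x : K} (hx : x ∈ span S (range v)) :
    α * x ∈ span S (range v) := by
  induction hx using span_induction with
  | mem x hx =>
    obtain ⟨i, rfl⟩ := hx
    rw [isRowEigenvector_iff.1 hv i]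
    exact sum_mem fun j _ => smul_of_tower_mem _ _ (subset_span ⟨j, rfl⟩)
  | zero => simp
  | add x y _ _ hx hy => rw [mul_add]; exact add_mem hx hy
  | smul s x _ hx => rw [mul_smul_comm]; exact smul_mem _ s hx

theorem span_range_vecMul_le (v : ι → K) (V : Matrix ι ι R) :
    span R (range (v ᵥ* V.map (algebraMap R K))) ≤ span R (range v) := by
  rw [span_le]
  rintro _ ⟨i, rfl⟩
  have : (v ᵥ* V.map (algebraMap R K)) i = ∑ j, V j i • v j := by
    simp [vecMul, dotProduct, Algebra.smul_def, mul_comm]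
  rw [SetLike.mem_coe, this]
  exact sum_mem fun j _ => smul_mem _ _ (subset_span ⟨j, rfl⟩)

theorem IsRowEigenvector.exists_of_isConj [DecidableEq ι] (hv : IsRowEigenvector A α v)
    (hv0 : v ≠ 0) {B : Matrix ι ι R} (h : IsConj A B) :
    ∃ w, w ≠ 0 ∧ IsRowEigenvector B α w ∧ span R (range w) = span R (range v) := by
  obtain ⟨U, V, -, hVU, rfl⟩ := isConj_iff_exists_mul_eq_one.1 h
  have hVU' : V.map (algebraMap R K) * U.map (algebraMap R K) = 1 := by
    rw [← Matrix.map_mul, hVU, Matrix.map_one _ (map_zero _) (map_one _)]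
  have hinv : v ᵥ* V.map (algebraMap R K) ᵥ* U.map (algebraMap R K) = v := by
    rw [vecMul_vecMul, hVU', vecMul_one]
  have hspan := span_range_vecMul_le (v ᵥ* V.map (algebraMap R K)) U
  rw [hinv] at hspan
  refine ⟨v ᵥ* V.map (algebraMap R K), fun h0 => hv0 (by rw [← hinv, h0, zero_vecMul]), ?_,
    (span_range_vecMul_le v V).antisymm hspan⟩
  rw [IsRowEigenvector, vecMul_vecMul, Matrix.map_mul, Matrix.map_mul, ← mul_assoc, ← mul_assoc,
    hVU', one_mul, ← vecMul_vecMul, hv, smul_vecMul]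

theorem exists_isRowEigenvector_iff [IsDomain K] [DecidableEq ι] (A : Matrix ι ι R) (α : K) :
    (∃ v ≠ 0, IsRowEigenvector A α v) ↔ aeval α A.charpoly = 0 := by
  rw [aeval_def, ← eval_map, ← charpoly_map, eval_charpoly, ← exists_vecMul_eq_zero_iff]
  simp [IsRowEigenvector, vecMul_sub, sub_eq_zero, eq_comm]

theorem toMatrix_eq_iff_isRowEigenvector {M : Type*} [AddCommGroup M] [Module R M]
    [DecidableEq ι] (b : Basis ι R M) {e : M →ₗ[R] K} (he : Function.Injective e)
    {φ : Module.End R M} (hφ : ∀ x, e (φ x) = α * e x) :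
    LinearMap.toMatrix b b φ = A ↔ IsRowEigenvector A α (e ∘ b) := by
  rw [isRowEigenvector_iff, ← (LinearMap.toMatrix b b).symm.injective.eq_iff,
    LinearMap.toMatrix_symm, toLin_toMatrix]
  refine (⟨fun h i => by rw [h], b.ext⟩ : _ ↔ ∀ i, _).trans (forall_congr' fun i => ?_)
  rw [toLin_self, ← he.eq_iff, hφ, map_sum]
  simp

theorem isConj_of_span_eq [DecidableEq ι] {A A' : Matrix ι ι R} {v v' : ι → K}
    (hv : IsRowEigenvector A α v) (hv' : IsRowEigenvector A' α v') (hli : LinearIndependent R v)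
    (hli' : LinearIndependent R v') (h : span R (range v) = span R (range v')) : IsConj A A' := by
  let φ : Module.End R (span R (range v)) :=
    (LinearMap.mulLeft R α).restrict fun _ => hv.mul_mem_span
  let b := Basis.span hli
  let b' := (Basis.span hli').map (LinearEquiv.ofEq _ _ h.symm)
  have hb : LinearMap.toMatrix b b φ = A := by
    refine (toMatrix_eq_iff_isRowEigenvector b (span R (range v)).injective_subtype
      (fun _ => rfl)).2 ?_
    convert hv using 1
    exact funext fun i => congrArg Subtype.val (Basis.span_apply hli i)
  have hb' : LinearMap.toMatrix b' b' φ = A' := by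
    refine (toMatrix_eq_iff_isRowEigenvector b' (span R (range v)).injective_subtype
      (fun _ => rfl)).2 ?_
    convert hv' using 1
    exact funext fun i => congrArg Subtype.val (Basis.span_apply hli' i)
  exact hb ▸ hb' ▸ LinearMap.isConj_toMatrix b b' φ

end RowEigenvector

end LatimerMacDuffee

namespace LatimerMacDuffee

section Rational

variable {ι K : Type*} [Fintype ι] [Field K] [CharZero K] {α : K} {A : Matrix ι ι ℤ}
  {v w : ι → K}

theorem IsRowEigenvector.span_rat_eq_top (hgen : Algebra.adjoin ℚ {α} = ⊤)
    (hv : IsRowEigenvector A α v) (hv0 : v ≠ 0) : span ℚ (range v) = ⊤ := by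
  obtain ⟨i, hi⟩ := Function.ne_iff.1 hv0
  exact eq_top_of_mul_mem_of_ne_zero hgen (fun _ => hv.mul_mem_span) (subset_span ⟨i, rfl⟩) hi

theorem IsRowEigenvector.linearIndependent (hgen : Algebra.adjoin ℚ {α} = ⊤)
    (hcard : Fintype.card ι = finrank ℚ K) (hv : IsRowEigenvector A α v) (hv0 : v ≠ 0) :
    LinearIndependent ℚ v :=
  linearIndependent_of_top_le_span_of_card_eq_finrank (hv.span_rat_eq_top hgen hv0).ge hcard

theorem IsRowEigenvector.exists_eq_smul (hgen : Algebra.adjoin ℚ {α} = ⊤)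
    (hcard : Fintype.card ι = finrank ℚ K) (hv : IsRowEigenvector A α v)
    (hw : IsRowEigenvector A α w) (hv0 : v ≠ 0) : ∃ x : K, w = x • v := by
  have hli := hv.linearIndependent hgen hcard hv0
  have hsp := (hv.span_rat_eq_top hgen hv0).ge
  let b := Basis.mk hli hsp
  let g : K →ₗ[ℚ] K := b.constr ℚ w
  have hg : ∀ i, g (v i) = w i := fun i => by
    rw [← Basis.mk_apply hli hsp i]
    exact b.constr_basis ℚ w i
  have hcomm : g ∘ₗ LinearMap.mulLeft ℚ α = LinearMap.mulLeft ℚ α ∘ₗ g := b.ext fun i => by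
    simp only [LinearMap.comp_apply, LinearMap.mulLeft_apply, b, Basis.mk_apply, hg,
      isRowEigenvector_iff.1 hv i, isRowEigenvector_iff.1 hw i, map_sum, map_zsmul]
  -- `g` commutes with `α`, hence with all of `K = ℚ[α]`: it is multiplication by `g 1`.
  refine ⟨g 1, funext fun i => ?_⟩
  have := g.map_mul_of_mem_adjoin_singleton (LinearMap.congr_fun hcomm)
    (hgen ▸ Algebra.mem_top : v i ∈ _) 1
  simpa [hg, mul_comm] using this

end Rational

section Ideal

variable {K : Type*} [Field K] {α : K}

def IsSpanOfEigenvector {ι : Type*} [Fintype ι] (a : Submodule (Algebra.adjoin ℤ {α}) K)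
    (A : Matrix ι ι ℤ) : Prop :=
  ∃ v : ι → K, v ≠ 0 ∧ IsRowEigenvector A α v ∧ a.restrictScalars ℤ = span ℤ (range v)

variable {ι : Type*} {a : Submodule (Algebra.adjoin ℤ {α}) K}

theorem restrictScalars_eq_span_coe_basis (b : Basis ι ℤ a) :
    a.restrictScalars ℤ = span ℤ (range fun i => (b i : K)) := by
  have : (range fun i => (b i : K)) = a.subtype.restrictScalars ℤ '' range b := range_comp _ _
  rw [this, ← map_span, b.span_eq, Submodule.map_top, LinearMap.range_restrictScalars,
    range_subtype]

theorem coe_basis_ne_zero (ha : a ≠ ⊥) (b : Basis ι ℤ a) : (fun i => (b i : K)) ≠ 0 := by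
  intro h0
  apply ha
  rw [← restrictScalars_eq_bot_iff ℤ, restrictScalars_eq_span_coe_basis b, h0]
  simp

def mulGen (a : Submodule (Algebra.adjoin ℤ {α}) K) : a →ₗ[ℤ] a :=
  DistribSMul.toLinearMap ℤ a (⟨α, Algebra.self_mem_adjoin_singleton ℤ α⟩ : Algebra.adjoin ℤ {α})

theorem coe_mulGen (x : a) : (mulGen a x : K) = α * x := rfl

variable [Fintype ι] [DecidableEq ι]

theorem isSpanOfEigenvector_toMatrix (ha : a ≠ ⊥) (b : Basis ι ℤ a) {φ : a →ₗ[ℤ] a}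
    (hφ : ∀ x, (φ x : K) = α * x) : IsSpanOfEigenvector a (LinearMap.toMatrix b b φ) :=
  ⟨_, coe_basis_ne_zero ha b,
    (toMatrix_eq_iff_isRowEigenvector b (e := a.subtype.restrictScalars ℤ)
      Subtype.val_injective hφ).1 rfl,
    restrictScalars_eq_span_coe_basis b⟩

theorem exists_isSpanOfEigenvector {A : Matrix ι ι ℤ} (hroot : aeval α A.charpoly = 0) :
    ∃ a : Submodule (Algebra.adjoin ℤ {α}) K, a ≠ ⊥ ∧ a.FG ∧ IsSpanOfEigenvector a A := by
  obtain ⟨v, hv0, hv⟩ := (exists_isRowEigenvector_iff A α).2 hroot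
  have ha := restrictScalars_span_adjoin_singleton (α := α) fun _ => hv.mul_mem_span (S := ℤ)
  refine ⟨span _ (range v), fun h => hv0 ?_, fg_span (finite_range v), v, hv0, hv, ha⟩
  rw [← restrictScalars_eq_bot_iff ℤ, ha, span_eq_bot] at h
  exact funext fun i => h _ ⟨i, rfl⟩

variable [CharZero K]

theorem IsSpanOfEigenvector.charpoly_eq {A : Matrix ι ι ℤ} {f : ℤ[X]} (hmonic : f.Monic)
    (hirr : Irreducible f) (hroot : aeval α f = 0) (hdeg : f.natDegree = Fintype.card ι)
    (h : IsSpanOfEigenvector a A) : A.charpoly = f := by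
  obtain ⟨v, hv0, hv, -⟩ := h
  have hint : IsIntegral ℤ α := ⟨f, hmonic, hroot⟩
  have hf : f ∣ minpoly ℤ α :=
    (minpoly.irreducible hint).dvd_symm hirr (minpoly.isIntegrallyClosed_dvd hint hroot)
  refine eq_of_monic_of_dvd_of_natDegree_le hmonic (charpoly_monic A) (hf.trans ?_) ?_
  · exact minpoly.isIntegrallyClosed_dvd hint
      ((exists_isRowEigenvector_iff A α).1 ⟨v, hv0, hv⟩)
  · rw [charpoly_natDegree_eq_dim, hdeg]

theorem nonempty_basis (hint : IsIntegral ℤ α) (hgen : Algebra.adjoin ℚ {α} = ⊤) {n : ℕ}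
    (hdim : finrank ℚ K = n) (ha : a ≠ ⊥) (hfg : a.FG) : Nonempty (Basis (Fin n) ℤ a) := by
  have := Algebra.finite_adjoin_simple_of_isIntegral hint
  have : Module.Finite (Algebra.adjoin ℤ {α}) a := Module.Finite.iff_fg.2 hfg
  have : Module.Finite ℤ a := .trans (Algebra.adjoin ℤ {α}) a
  have : Module.Free ℤ a := Module.free_of_finite_type_torsion_free'
  let b := Module.Free.chooseBasis ℤ a
  have hv : IsRowEigenvector (LinearMap.toMatrix b b (mulGen a)) α (fun i => (b i : K)) :=
    (toMatrix_eq_iff_isRowEigenvector b (e := a.subtype.restrictScalars ℤ)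
      Subtype.val_injective coe_mulGen).1 rfl
  have hli : LinearIndependent ℚ fun i => (b i : K) :=
    (LinearIndependent.iff_fractionRing ℤ ℚ).1
      (b.linearIndependent.map' (a.subtype.restrictScalars ℤ)
        (LinearMap.ker_eq_bot.2 Subtype.val_injective))
  have hcard := finrank_eq_card_basis (Basis.mk hli (hv.span_rat_eq_top hgen
    (coe_basis_ne_zero ha b)).ge)
  exact ⟨b.reindex (Fintype.equivFinOfCardEq (hcard.symm.trans hdim))⟩

theorem IsSpanOfEigenvector.exists_smul_iff_isConj (hgen : Algebra.adjoin ℚ {α} = ⊤)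
    (hcard : Fintype.card ι = finrank ℚ K) {a' : Submodule (Algebra.adjoin ℤ {α}) K}
    {A A' : Matrix ι ι ℤ} (h : IsSpanOfEigenvector a A) (h' : IsSpanOfEigenvector a' A') :
    (∃ x : K, x ≠ 0 ∧ (a' : Set K) = (fun y => x * y) '' a) ↔ IsConj A A' := by
  obtain ⟨v, hv0, hv, ha⟩ := h
  obtain ⟨v', hv0', hv', ha'⟩ := h'
  have hli {B : Matrix ι ι ℤ} {u : ι → K} (hu : IsRowEigenvector B α u) (hu0 : u ≠ 0) :
      LinearIndependent ℤ u :=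
    (hu.linearIndependent hgen hcard hu0).restrict_scalars' ℤ
  rw [← coe_restrictScalars ℤ a', ← coe_restrictScalars ℤ a, ha, ha']
  constructor
  · rintro ⟨x, hx0, hxa⟩
    have hxv : x • v ≠ 0 := smul_ne_zero hx0 hv0
    refine isConj_of_span_eq (hv.smul x) hv' (hli (hv.smul x) hxv) (hli hv' hv0') ?_
    rw [← SetLike.coe_set_eq, coe_span_range_smul, hxa]
  · intro hAA'
    obtain ⟨w, hw0, hw, hwv⟩ := hv.exists_of_isConj hv0 hAA'
    obtain ⟨x, rfl⟩ := hw.exists_eq_smul hgen hcard hv' hw0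
    refine ⟨x, fun hx => hv0' (by rw [hx, zero_smul]), ?_⟩
    rw [coe_span_range_smul, hwv]

end Ideal

end LatimerMacDuffee

open LatimerMacDuffee

set_option synthInstance.maxHeartbeats 1000000 in
/-- Latimer–MacDuffee: there is a bijection between the ideal class monoid of `ℤ[α]`
(fractional `ℤ[α]`-ideals up to multiplication by `K*`) and `GL_n(ℤ)`-conjugacy classes
of integer matrices with characteristic polynomial `f`, sending the class of `𝔞` to
the class of the matrix of multiplication by `α` on `𝔞` in a `ℤ`-basis. -/
theorem latimer_macduffee {K : Type*} [Field K] [NumberField K]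
    (f : Polynomial ℤ) (n : ℕ) (hn : f.natDegree = n) (hmonic : f.Monic)
    (hirr : Irreducible f) (α : K) (hroot : Polynomial.aeval α f = 0)
    (hgen : Algebra.adjoin ℚ ({α} : Set K) = ⊤)
    (hdim : Module.finrank ℚ K = n) :
    ∃ e : Quot (fun (a b : {a : Submodule (Algebra.adjoin ℤ ({α} : Set K)) K // a ≠ ⊥ ∧ a.FG}) =>
            ∃ x : K, x ≠ 0 ∧ ((b : Submodule (Algebra.adjoin ℤ ({α} : Set K)) K) : Set K) =
              (fun y => x * y) '' ((a : Submodule (Algebra.adjoin ℤ ({α} : Set K)) K) : Set K)) ≃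
          Quot (fun (A B : {A : Matrix (Fin n) (Fin n) ℤ // A.charpoly = f}) =>
            ∃ U V : Matrix (Fin n) (Fin n) ℤ, U * V = 1 ∧ V * U = 1 ∧ (B : Matrix (Fin n) (Fin n) ℤ) = U * A * V),
      ∀ (a : {a : Submodule (Algebra.adjoin ℤ ({α} : Set K)) K // a ≠ ⊥ ∧ a.FG})
        (bs : Module.Basis (Fin n) ℤ a.1) (φ : a.1 →ₗ[ℤ] a.1),
        (∀ x : a.1, (φ x : K) = α * (x : K)) →
        ∀ M : {A : Matrix (Fin n) (Fin n) ℤ // A.charpoly = f},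
          (M : Matrix (Fin n) (Fin n) ℤ) = LinearMap.toMatrix bs bs φ →
          e (Quot.mk _ a) = Quot.mk _ M := by
  have hint : IsIntegral ℤ α := ⟨f, hmonic, hroot⟩
  have hcard : Fintype.card (Fin n) = finrank ℚ K := by rw [Fintype.card_fin, hdim]
  refine (Quot.exists_equiv_of_rel (fun a A => IsSpanOfEigenvector a.1 A.1) (fun a => ?_)
      (fun A => ?_) (fun _ => ⟨1, one_ne_zero, by simp⟩)
      (fun _ => ⟨1, 1, mul_one 1, mul_one 1, by simp⟩) fun _ _ _ _ h h' =>
      (h.exists_smul_iff_isConj hgen hcard h').trans isConj_iff_exists_mul_eq_one).imp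
    fun e he a bs φ hφ M hM => he a M (hM ▸ isSpanOfEigenvector_toMatrix a.2.1 bs hφ)
  · obtain ⟨bs⟩ := nonempty_basis hint hgen hdim a.2.1 a.2.2
    have h := isSpanOfEigenvector_toMatrix a.2.1 bs coe_mulGen
    exact ⟨⟨_, h.charpoly_eq hmonic hirr hroot (by rw [hn, Fintype.card_fin])⟩, h⟩
  · obtain ⟨a, ha, hfg, h⟩ := exists_isSpanOfEigenvector (α := α) (A := A.1)
      (by rw [A.2, hroot])
    exact ⟨⟨a, ha, hfg⟩, h⟩
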